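/- Let γ > 0, c > 0, let u : (0,∞) → (0,∞) be such that ψ(z) = log u(e^z) is strictly increasing and convex on ℝ, and let η : [0,∞) → ℝ satisfy η(1) = −1 and η(z) ≥ −z^{1+γ} for all z ≥ 0. Define the composite scoring rule S(g,f) = η(u(c·⟨g f^γ⟩)/u(c·⟨f^{1+γ}⟩)) · u(c·⟨f^{1+γ}⟩) for g, f ∈ F_γ with ⟨g f^γ⟩ > 0. Then: (1) S(g,f) ≥ S(g,g) = −u(c·⟨g^{1+γ}⟩) for all such g, f ∈ F_γ; and (2) for probability densities q, p ∈ F_γ (⟨q⟩ = ⟨p⟩ = 1) with ⟨q p^γ⟩ > 0, equality S(q,p) = S(q,q) holds if and only if q = p ν-almost everywhere. -/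

import Mathlib

open MeasureTheory

/-- Membership in the class `F_γ`: measurable, not a.e. zero, with `⟨g^{1+γ}⟩ < ∞`. -/
def MemF {X : Type*} [MeasurableSpace X] (ν : Measure X) (γ : ℝ) (g : X → NNReal) : Prop :=
  Measurable g ∧ ¬ (g =ᵐ[ν] 0) ∧ (∫⁻ x, (g x : ENNReal) ^ (1 + γ) ∂ν) ≠ ⊤

/-- The composite scoring rule
`S(g,f) = η(u(c⟨g f^γ⟩)/u(c⟨f^{1+γ}⟩)) ⬝ u(c⟨f^{1+γ}⟩)`. -/
noncomputable def compositeScore {X : Type*} [MeasurableSpace X] (ν : Measure X)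
    (γ c : ℝ) (η u : ℝ → ℝ) (g f : X → NNReal) : ℝ :=
  η (u (c * (∫⁻ x, (g x : ENNReal) * (f x : ENNReal) ^ γ ∂ν).toReal) /
      u (c * (∫⁻ x, (f x : ENNReal) ^ (1 + γ) ∂ν).toReal)) *
    u (c * (∫⁻ x, (f x : ENNReal) ^ (1 + γ) ∂ν).toReal)

/-!
Hölder's inequality bounds `⟨g f^γ⟩` by `⟨g^{1+γ}⟩^{1/(1+γ)} ⟨f^{1+γ}⟩^{γ/(1+γ)}`. Since
`ψ = log ∘ u ∘ exp` is increasing and convex, `u` inherits this multiplicative bound: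
`u(c⟨g f^γ⟩)^{1+γ} ≤ u(c⟨g^{1+γ}⟩) u(c⟨f^{1+γ}⟩)^γ`, and `η(z) ≥ -z^{1+γ}` applied to
`z = u(c⟨g f^γ⟩) / u(c⟨f^{1+γ}⟩)` turns it into `S(g,f) ≥ -u(c⟨g^{1+γ}⟩) = S(g,g)`.
If `S(q,p) = S(q,q)`, strict monotonicity of `ψ` forces equality in Hölder's inequality, so
`q^{1+γ}` and `p^{1+γ}` are proportional, and `⟨q⟩ = ⟨p⟩ = 1` makes the factor `1`.
-/

open Real Set
open scoped ENNReal

theorem StrictMono.eq_of_convexOn_of_le {ψ : ℝ → ℝ} (hmono : StrictMono ψ)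
    (hconv : ConvexOn ℝ univ ψ) {w w' s x y : ℝ} (hw : 0 ≤ w) (hw' : 0 ≤ w') (hww : w + w' = 1)
    (h : s ≤ w * x + w' * y) (heq : ψ s = w * ψ x + w' * ψ y) : s = w * x + w' * y := by
  refine hmono.injective (le_antisymm (hmono.monotone h) ?_)
  simpa [heq] using hconv.2 (mem_univ x) (mem_univ y) hw hw' hww

theorem one_div_one_add_add_div_one_add {γ : ℝ} (hγ : 1 + γ ≠ 0) :
    1 / (1 + γ) + γ / (1 + γ) = 1 := by
  field_simp

section Score

variable {γ : ℝ} {η : ℝ → ℝ} {U V W : ℝ}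

theorem one_add_mul_weighted (hγ : 1 + γ ≠ 0) (a b : ℝ) :
    (1 + γ) * (1 / (1 + γ) * a + γ / (1 + γ) * b) = a + γ * b := by
  field_simp

theorem log_div_rpow_mul (γ : ℝ) (hU : 0 < U) (hV : 0 < V) :
    log ((U / V) ^ (1 + γ) * V) = (1 + γ) * log U - γ * log V := by
  rw [log_mul (by positivity) hV.ne', log_rpow (div_pos hU hV), log_div hU.ne' hV.ne']
  ring

theorem div_rpow_mul_le_of_log_le (hγ : 0 < 1 + γ) (hU : 0 < U) (hV : 0 < V) (hW : 0 < W)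
    (h : log U ≤ 1 / (1 + γ) * log W + γ / (1 + γ) * log V) : (U / V) ^ (1 + γ) * V ≤ W := by
  rw [← log_le_log_iff (by positivity) hW, log_div_rpow_mul γ hU hV]
  have := mul_le_mul_of_nonneg_left h hγ.le
  rw [one_add_mul_weighted hγ.ne'] at this
  linarith

theorem neg_le_eta_div_mul (hη : ∀ z : ℝ, 0 ≤ z → η z ≥ -z ^ (1 + γ))
    (hU : 0 ≤ U) (hV : 0 < V) (h : (U / V) ^ (1 + γ) * V ≤ W) : -W ≤ η (U / V) * V :=
  calc -W ≤ -(U / V) ^ (1 + γ) * V := by linarith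
    _ ≤ η (U / V) * V := mul_le_mul_of_nonneg_right (hη _ (by positivity)) hV.le

theorem log_eq_of_eta_div_mul_eq (hγ : 0 < 1 + γ) (hη : ∀ z : ℝ, 0 ≤ z → η z ≥ -z ^ (1 + γ))
    (hU : 0 < U) (hV : 0 < V) (hW : 0 < W)
    (h : log U ≤ 1 / (1 + γ) * log W + γ / (1 + γ) * log V) (heq : η (U / V) * V = -W) :
    log U = 1 / (1 + γ) * log W + γ / (1 + γ) * log V := by
  have hle := div_rpow_mul_le_of_log_le hγ hU hV hW h
  have hge : W ≤ (U / V) ^ (1 + γ) * V := by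
    have := mul_le_mul_of_nonneg_right (hη (U / V) (by positivity)) hV.le
    linarith
  have hlog := congrArg log (le_antisymm hle hge)
  rw [log_div_rpow_mul γ hU hV] at hlog
  refine mul_left_cancel₀ hγ.ne' ?_
  rw [one_add_mul_weighted hγ.ne']
  linarith

end Score

section LogExpConvex

variable {u : ℝ → ℝ} {c w w' A B G : ℝ}

theorem log_mul_le_weighted (hc : 0 < c) (hA : 0 < A) (hB : 0 < B) (hG : 0 < G)
    (hww : w + w' = 1) (h : log A ≤ w * log G + w' * log B) :
    log (c * A) ≤ w * log (c * G) + w' * log (c * B) := by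
  rw [log_mul hc.ne' hA.ne', log_mul hc.ne' hG.ne', log_mul hc.ne' hB.ne']
  linear_combination h - log c * hww

theorem log_apply_mul_le (hψm : Monotone fun z : ℝ => log (u (exp z)))
    (hψc : ConvexOn ℝ univ fun z : ℝ => log (u (exp z))) (hc : 0 < c)
    (hw : 0 ≤ w) (hw' : 0 ≤ w') (hww : w + w' = 1) (hA : 0 < A) (hB : 0 < B) (hG : 0 < G)
    (h : log A ≤ w * log G + w' * log B) :
    log (u (c * A)) ≤ w * log (u (c * G)) + w' * log (u (c * B)) := by
  have := (hψm (log_mul_le_weighted hc hA hB hG hww h)).trans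
    (hψc.2 (mem_univ _) (mem_univ _) hw hw' hww)
  simpa [exp_log, hc, hA, hB, hG] using this

theorem log_eq_of_log_apply_mul_eq (hψm : StrictMono fun z : ℝ => log (u (exp z)))
    (hψc : ConvexOn ℝ univ fun z : ℝ => log (u (exp z))) (hc : 0 < c)
    (hw : 0 ≤ w) (hw' : 0 ≤ w') (hww : w + w' = 1) (hA : 0 < A) (hB : 0 < B) (hG : 0 < G)
    (h : log A ≤ w * log G + w' * log B)
    (heq : log (u (c * A)) = w * log (u (c * G)) + w' * log (u (c * B))) :
    log A = w * log G + w' * log B := by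
  have := hψm.eq_of_convexOn_of_le hψc hw hw' hww (log_mul_le_weighted hc hA hB hG hww h)
    (by simpa [exp_log, hc, hA, hB, hG] using heq)
  rw [log_mul hc.ne' hA.ne', log_mul hc.ne' hG.ne', log_mul hc.ne' hB.ne'] at this
  linear_combination this + log c * hww

end LogExpConvex

namespace ENNReal

variable {α : Type*} [MeasurableSpace α] {μ : Measure α}

theorem ae_eq_of_lintegral_mul_eq_Lp_mul_Lq {p q : ℝ} (hpq : p.HolderConjugate q)
    {f g : α → ℝ≥0∞} (hf : AEMeasurable f μ) (hg : AEMeasurable g μ)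
    (hf0 : ∫⁻ a, f a ^ p ∂μ ≠ 0) (hftop : ∫⁻ a, f a ^ p ∂μ ≠ ⊤)
    (hg0 : ∫⁻ a, g a ^ q ∂μ ≠ 0) (hgtop : ∫⁻ a, g a ^ q ∂μ ≠ ⊤)
    (h : ∫⁻ a, (f * g) a ∂μ = (∫⁻ a, f a ^ p ∂μ) ^ (1 / p) * (∫⁻ a, g a ^ q ∂μ) ^ (1 / q)) :
    (fun a => f a ^ p * (∫⁻ a, f a ^ p ∂μ)⁻¹) =ᵐ[μ] fun a => g a ^ q * (∫⁻ a, g a ^ q ∂μ)⁻¹ := by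
  -- Equality in Hölder forces a.e. equality in Young's inequality for the normalised functions.
  set F := funMulInvSnorm f p μ
  set G := funMulInvSnorm g q μ
  have hFm : AEMeasurable F μ := hf.mul_const _
  have hGm : AEMeasurable G μ := hg.mul_const _
  have hF1 : ∫⁻ a, F a ^ p ∂μ = 1 := lintegral_rpow_funMulInvSnorm_eq_one hpq.pos hf0 hftop
  have hG1 : ∫⁻ a, G a ^ q ∂μ = 1 := lintegral_rpow_funMulInvSnorm_eq_one hpq.symm.pos hg0 hgtop
  have hFG : ∫⁻ a, F a * G a ∂μ = 1 := by
    set N := (∫⁻ a, f a ^ p ∂μ) ^ (1 / p) * (∫⁻ a, g a ^ q ∂μ) ^ (1 / q)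
    have hN0 : N ≠ 0 := by simp [N, hf0, hg0, hftop, hgtop, hpq.pos, hpq.symm.pos]
    have hNtop : N ≠ ⊤ := by
      simp [N, hf0, hg0, hftop, hgtop, hpq.pos, hpq.symm.pos, ENNReal.mul_eq_top]
    calc ∫⁻ a, F a * G a ∂μ = ∫⁻ a, (f * g) a * N⁻¹ ∂μ := by
          refine lintegral_congr fun a => ?_
          simp only [F, G, N, funMulInvSnorm, Pi.mul_apply]
          rw [ENNReal.mul_inv (by simp [hf0, hftop, hpq.pos]) (by simp [hf0, hftop, hpq.pos])]
          ring
      _ = 1 := by rw [lintegral_mul_const'' _ (hf.mul hg), h, ENNReal.mul_inv_cancel hN0 hNtop]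
  have hyoung : ∫⁻ a, F a ^ p / ENNReal.ofReal p + G a ^ q / ENNReal.ofReal q ∂μ = 1 := by
    simp only [div_eq_mul_inv]
    rw [lintegral_add_left' ((hFm.pow_const p).mul_const _), lintegral_mul_const'' _
      (hFm.pow_const p), lintegral_mul_const' _ _ (by simp [hpq.symm.pos]), hF1, hG1, one_mul,
      one_mul, hpq.inv_add_inv_ennreal]
  have hae : (fun a => F a * G a) =ᵐ[μ]
      fun a => F a ^ p / ENNReal.ofReal p + G a ^ q / ENNReal.ofReal q :=
    ae_eq_of_ae_le_of_lintegral_le (ae_of_all _ fun a => young_inequality (F a) (G a) hpq)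
      (by simp [hFG]) (by fun_prop) (by rw [hFG, hyoung])
  have hFfin := ae_lt_top' (hFm.pow_const p) (by simp [hF1])
  have hGfin := ae_lt_top' (hGm.pow_const q) (by simp [hG1])
  filter_upwards [hae, hFfin, hGfin] with a ha hFa hGa
  rw [← funMulInvSnorm_rpow hpq.pos, ← funMulInvSnorm_rpow hpq.symm.pos]
  rcases (young_inequality_eq_iff (F a) (G a) hpq).1 ha with ⟨hF, -⟩ | ⟨-, hG⟩ | hFG
  · simp [hF, hpq.pos] at hFa
  · simp [hG, hpq.symm.pos] at hGa
  · exact hFG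

end ENNReal

theorem Real.holderConjugate_one_add {γ : ℝ} (hγ : 0 < γ) :
    (1 + γ).HolderConjugate ((1 + γ) / γ) :=
  (Real.holderConjugate_iff_eq_conjExponent (by linarith)).2 (by rw [add_sub_cancel_left])

section OneAddExponent

variable {α : Type*} [MeasurableSpace α] {μ : Measure α} {γ : ℝ} {f g : α → ℝ≥0∞}

theorem lintegral_mul_rpow_le (hγ : 0 < γ) (hf : AEMeasurable f μ) (hg : AEMeasurable g μ) :
    ∫⁻ a, f a * g a ^ γ ∂μ ≤
      (∫⁻ a, f a ^ (1 + γ) ∂μ) ^ (1 / (1 + γ)) * (∫⁻ a, g a ^ (1 + γ) ∂μ) ^ (γ / (1 + γ)) := by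
  have := ENNReal.lintegral_mul_rpow_le_lintegral_rpow_mul_lintegral_rpow
    (Real.holderConjugate_one_add hγ) hf hg
  rwa [add_sub_cancel_left, one_div_div] at this

theorem ae_eq_of_lintegral_mul_rpow_eq (hγ : 0 < γ) (hf : AEMeasurable f μ)
    (hg : AEMeasurable g μ) (hf0 : ∫⁻ a, f a ^ (1 + γ) ∂μ ≠ 0)
    (hftop : ∫⁻ a, f a ^ (1 + γ) ∂μ ≠ ⊤) (hg0 : ∫⁻ a, g a ^ (1 + γ) ∂μ ≠ 0)
    (hgtop : ∫⁻ a, g a ^ (1 + γ) ∂μ ≠ ⊤)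
    (h : ∫⁻ a, f a * g a ^ γ ∂μ =
      (∫⁻ a, f a ^ (1 + γ) ∂μ) ^ (1 / (1 + γ)) * (∫⁻ a, g a ^ (1 + γ) ∂μ) ^ (γ / (1 + γ))) :
    (fun a => f a ^ (1 + γ) * (∫⁻ a, f a ^ (1 + γ) ∂μ)⁻¹) =ᵐ[μ]
      fun a => g a ^ (1 + γ) * (∫⁻ a, g a ^ (1 + γ) ∂μ)⁻¹ := by
  have hq (a : α) : (g a ^ γ) ^ ((1 + γ) / γ) = g a ^ (1 + γ) := by
    rw [← ENNReal.rpow_mul, mul_div_cancel₀ _ hγ.ne']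
  simpa only [hq] using ENNReal.ae_eq_of_lintegral_mul_eq_Lp_mul_Lq
    (g := fun a => g a ^ γ) (Real.holderConjugate_one_add hγ) hf (hg.pow_const γ) hf0 hftop
    (by simpa only [hq] using hg0) (by simpa only [hq] using hgtop)
    (by simpa only [hq, Pi.mul_apply, one_div_div] using h)

end OneAddExponent

theorem ae_eq_of_rpow_mul_ae_eq {α : Type*} [MeasurableSpace α] {μ : Measure α} {p : ℝ}
    (hp : 0 < p) {f g : α → ℝ≥0∞} {a b : ℝ≥0∞} (hb0 : b ≠ 0) (hbtop : b ≠ ⊤)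
    (hf : AEMeasurable f μ) (hg : AEMeasurable g μ) (hfg : ∫⁻ x, f x ∂μ = ∫⁻ x, g x ∂μ)
    (h0 : ∫⁻ x, f x ∂μ ≠ 0) (htop : ∫⁻ x, f x ∂μ ≠ ⊤)
    (h : (fun x => f x ^ p * a) =ᵐ[μ] fun x => g x ^ p * b) : f =ᵐ[μ] g := by
  have hroot (x c : ℝ≥0∞) : (x ^ p * c) ^ (1 / p) = x * c ^ (1 / p) := by
    rw [ENNReal.mul_rpow_of_nonneg _ _ (by positivity), ← ENNReal.rpow_mul,
      mul_one_div_cancel hp.ne', ENNReal.rpow_one]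
  have h' : (fun x => f x * a ^ (1 / p)) =ᵐ[μ] fun x => g x * b ^ (1 / p) :=
    h.mono fun x hx => by simp only [← hroot, hx]
  have hab : a ^ (1 / p) = b ^ (1 / p) := by
    have := lintegral_congr_ae h'
    rw [lintegral_mul_const'' _ hf, lintegral_mul_const'' _ hg, ← hfg] at this
    exact (ENNReal.mul_right_inj h0 htop).1 this
  filter_upwards [h'] with x hx
  rw [hab] at hx
  exact (ENNReal.mul_left_inj (by simp [hb0, hbtop, hp]) (by simp [hb0, hbtop, hp])).1 hx

section CompositeScore

variable {X : Type*} [MeasurableSpace X] {ν : Measure X} {γ c : ℝ} {η u : ℝ → ℝ}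
  {g f : X → NNReal}

theorem MemF.lintegral_rpow_ne_zero (hg : MemF ν γ g) (hγ : 0 ≤ 1 + γ) :
    ∫⁻ x, (g x : ℝ≥0∞) ^ (1 + γ) ∂ν ≠ 0 := fun h =>
  hg.2.1 <| (ENNReal.ae_eq_zero_of_lintegral_rpow_eq_zero hγ
    hg.1.coe_nnreal_ennreal.aemeasurable h).mono fun x hx => by simpa using hx

theorem MemF.toReal_lintegral_rpow_pos (hg : MemF ν γ g) (hγ : 0 ≤ 1 + γ) :
    0 < (∫⁻ x, (g x : ℝ≥0∞) ^ (1 + γ) ∂ν).toReal :=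
  ENNReal.toReal_pos (hg.lintegral_rpow_ne_zero hγ) hg.2.2

theorem MemF.lintegral_mul_rpow_ne_top (hγ : 0 < γ) (hg : MemF ν γ g) (hf : MemF ν γ f) :
    ∫⁻ x, (g x : ℝ≥0∞) * (f x : ℝ≥0∞) ^ γ ∂ν ≠ ⊤ :=
  ne_top_of_le_ne_top (by have := hg.2.2; have := hf.2.2; finiteness)
    (lintegral_mul_rpow_le hγ hg.1.coe_nnreal_ennreal.aemeasurable
      hf.1.coe_nnreal_ennreal.aemeasurable)

theorem MemF.log_lintegral_mul_rpow_le (hγ : 0 < γ) (hg : MemF ν γ g) (hf : MemF ν γ f)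
    (hA : ∫⁻ x, (g x : ℝ≥0∞) * (f x : ℝ≥0∞) ^ γ ∂ν ≠ 0) :
    log (∫⁻ x, (g x : ℝ≥0∞) * (f x : ℝ≥0∞) ^ γ ∂ν).toReal ≤
      1 / (1 + γ) * log (∫⁻ x, (g x : ℝ≥0∞) ^ (1 + γ) ∂ν).toReal +
        γ / (1 + γ) * log (∫⁻ x, (f x : ℝ≥0∞) ^ (1 + γ) ∂ν).toReal := by
  have hholder := ENNReal.toReal_mono (by have := hg.2.2; have := hf.2.2; finiteness)
    (lintegral_mul_rpow_le hγ hg.1.coe_nnreal_ennreal.aemeasurable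
      hf.1.coe_nnreal_ennreal.aemeasurable (μ := ν))
  rw [ENNReal.toReal_mul, ← ENNReal.toReal_rpow, ← ENNReal.toReal_rpow] at hholder
  have hG := hg.toReal_lintegral_rpow_pos (by positivity)
  have hB := hf.toReal_lintegral_rpow_pos (by positivity)
  rw [← log_rpow hG, ← log_rpow hB, ← log_mul (by positivity) (by positivity)]
  exact log_le_log (ENNReal.toReal_pos hA (hg.lintegral_mul_rpow_ne_top hγ hf)) hholder

theorem compositeScore_self (hγ : 0 ≤ γ) (hc : 0 < c) (hu : ∀ z : ℝ, 0 < z → 0 < u z)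
    (hη1 : η 1 = -1) (hg : MemF ν γ g) :
    compositeScore ν γ c η u g g = -u (c * (∫⁻ x, (g x : ℝ≥0∞) ^ (1 + γ) ∂ν).toReal) := by
  have hgg : ∫⁻ x, (g x : ℝ≥0∞) * (g x : ℝ≥0∞) ^ γ ∂ν = ∫⁻ x, (g x : ℝ≥0∞) ^ (1 + γ) ∂ν :=
    lintegral_congr fun x => by
      rw [ENNReal.rpow_add_of_nonneg _ _ zero_le_one hγ, ENNReal.rpow_one]
  have hpos := hu _ (mul_pos hc (hg.toReal_lintegral_rpow_pos (by linarith)))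
  rw [compositeScore, hgg, div_self hpos.ne', hη1, neg_one_mul]

theorem compositeScore_congr_ae {f' : X → NNReal} (h : f =ᵐ[ν] f') :
    compositeScore ν γ c η u g f = compositeScore ν γ c η u g f' := by
  have hA : ∫⁻ x, (g x : ℝ≥0∞) * (f x : ℝ≥0∞) ^ γ ∂ν =
      ∫⁻ x, (g x : ℝ≥0∞) * (f' x : ℝ≥0∞) ^ γ ∂ν :=
    lintegral_congr_ae (h.mono fun x hx => by simp only [hx])
  have hB : ∫⁻ x, (f x : ℝ≥0∞) ^ (1 + γ) ∂ν = ∫⁻ x, (f' x : ℝ≥0∞) ^ (1 + γ) ∂ν :=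
    lintegral_congr_ae (h.mono fun x hx => by simp only [hx])
  rw [compositeScore, compositeScore, hA, hB]

theorem neg_le_compositeScore (hγ : 0 < γ) (hc : 0 < c) (hu : ∀ z : ℝ, 0 < z → 0 < u z)
    (hψm : Monotone fun z : ℝ => log (u (exp z)))
    (hψc : ConvexOn ℝ univ fun z : ℝ => log (u (exp z)))
    (hη : ∀ z : ℝ, 0 ≤ z → η z ≥ -z ^ (1 + γ)) (hg : MemF ν γ g) (hf : MemF ν γ f)
    (hA : ∫⁻ x, (g x : ℝ≥0∞) * (f x : ℝ≥0∞) ^ γ ∂ν ≠ 0) :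
    -u (c * (∫⁻ x, (g x : ℝ≥0∞) ^ (1 + γ) ∂ν).toReal) ≤ compositeScore ν γ c η u g f := by
  have hApos := ENNReal.toReal_pos hA (hg.lintegral_mul_rpow_ne_top hγ hf)
  have hB := hf.toReal_lintegral_rpow_pos (by positivity)
  have hG := hg.toReal_lintegral_rpow_pos (by positivity)
  have hlog := log_apply_mul_le hψm hψc hc (by positivity) (by positivity)
    (one_div_one_add_add_div_one_add (by positivity)) hApos hB hG
    (hg.log_lintegral_mul_rpow_le hγ hf hA)
  exact neg_le_eta_div_mul hη (hu _ (by positivity)).le (hu _ (by positivity))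
    (div_rpow_mul_le_of_log_le (by positivity) (hu _ (by positivity)) (hu _ (by positivity))
      (hu _ (by positivity)) hlog)

theorem lintegral_mul_rpow_eq_of_compositeScore_eq (hγ : 0 < γ) (hc : 0 < c)
    (hu : ∀ z : ℝ, 0 < z → 0 < u z) (hψm : StrictMono fun z : ℝ => log (u (exp z)))
    (hψc : ConvexOn ℝ univ fun z : ℝ => log (u (exp z)))
    (hη : ∀ z : ℝ, 0 ≤ z → η z ≥ -z ^ (1 + γ)) (hg : MemF ν γ g) (hf : MemF ν γ f)
    (hA : ∫⁻ x, (g x : ℝ≥0∞) * (f x : ℝ≥0∞) ^ γ ∂ν ≠ 0)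
    (heq : compositeScore ν γ c η u g f = -u (c * (∫⁻ x, (g x : ℝ≥0∞) ^ (1 + γ) ∂ν).toReal)) :
    ∫⁻ x, (g x : ℝ≥0∞) * (f x : ℝ≥0∞) ^ γ ∂ν =
      (∫⁻ x, (g x : ℝ≥0∞) ^ (1 + γ) ∂ν) ^ (1 / (1 + γ)) *
        (∫⁻ x, (f x : ℝ≥0∞) ^ (1 + γ) ∂ν) ^ (γ / (1 + γ)) := by
  have hAtop := hg.lintegral_mul_rpow_ne_top hγ hf
  have hApos := ENNReal.toReal_pos hA hAtop
  have hB := hf.toReal_lintegral_rpow_pos (by positivity)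
  have hG := hg.toReal_lintegral_rpow_pos (by positivity)
  have hww := one_div_one_add_add_div_one_add (by positivity)
  have hholder := hg.log_lintegral_mul_rpow_le hγ hf hA
  have hle := log_apply_mul_le hψm.monotone hψc hc (by positivity) (by positivity) hww
    hApos hB hG hholder
  have hueq := log_eq_of_eta_div_mul_eq (by positivity) hη (hu _ (by positivity))
    (hu _ (by positivity)) (hu _ (by positivity)) hle heq
  have hlog := log_eq_of_log_apply_mul_eq hψm hψc hc (by positivity) (by positivity) hww
    hApos hB hG hholder hueq
  rw [← ENNReal.toReal_eq_toReal_iff' hAtop (by have := hg.2.2; have := hf.2.2; finiteness),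
    ENNReal.toReal_mul, ← ENNReal.toReal_rpow, ← ENNReal.toReal_rpow]
  refine log_injOn_pos hApos (by positivity : (0 : ℝ) < _) ?_
  rw [log_mul (by positivity) (by positivity), log_rpow hG, log_rpow hB]
  exact hlog

end CompositeScore

theorem composite_score_strictly_proper {X : Type*} [MeasurableSpace X] (ν : Measure X)
    (γ c : ℝ) (hγ : 0 < γ) (hc : 0 < c)
    (u : ℝ → ℝ) (hupos : ∀ z : ℝ, 0 < z → 0 < u z)
    (hψm : StrictMono (fun z : ℝ => Real.log (u (Real.exp z))))
    (hψc : ConvexOn ℝ Set.univ (fun z : ℝ => Real.log (u (Real.exp z))))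
    (η : ℝ → ℝ) (hη1 : η 1 = -1) (hη : ∀ z : ℝ, 0 ≤ z → η z ≥ -z ^ (1 + γ)) :
    (∀ g f : X → NNReal, MemF ν γ g → MemF ν γ f →
      (∫⁻ x, (g x : ENNReal) * (f x : ENNReal) ^ γ ∂ν) ≠ 0 →
      compositeScore ν γ c η u g g
          = -(u (c * (∫⁻ x, (g x : ENNReal) ^ (1 + γ) ∂ν).toReal)) ∧
        compositeScore ν γ c η u g f ≥ compositeScore ν γ c η u g g) ∧
    (∀ q p : X → NNReal, MemF ν γ q → MemF ν γ p →
      (∫⁻ x, (q x : ENNReal) ∂ν) = 1 → (∫⁻ x, (p x : ENNReal) ∂ν) = 1 →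
      (∫⁻ x, (q x : ENNReal) * (p x : ENNReal) ^ γ ∂ν) ≠ 0 →
      (compositeScore ν γ c η u q p = compositeScore ν γ c η u q q ↔ q =ᵐ[ν] p)) := by
  refine ⟨fun g f hg hf hA => ?_, fun q p hq hp hq1 hp1 hA => ⟨fun heq => ?_, fun hqp => ?_⟩⟩
  · have hself := compositeScore_self hγ.le hc hupos hη1 hg
    exact ⟨hself, hself ▸ neg_le_compositeScore hγ hc hupos hψm.monotone hψc hη hg hf hA⟩
  · have hholder := lintegral_mul_rpow_eq_of_compositeScore_eq hγ hc hupos hψm hψc hη hq hp hA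
      (heq.trans (compositeScore_self hγ.le hc hupos hη1 hq))
    have hq' := hq.1.coe_nnreal_ennreal.aemeasurable (μ := ν)
    have hp' := hp.1.coe_nnreal_ennreal.aemeasurable (μ := ν)
    have hnorm := ae_eq_of_lintegral_mul_rpow_eq hγ hq' hp' (hq.lintegral_rpow_ne_zero
      (by positivity)) hq.2.2 (hp.lintegral_rpow_ne_zero (by positivity)) hp.2.2 hholder
    refine (ae_eq_of_rpow_mul_ae_eq (by positivity) (ENNReal.inv_ne_zero.2 hp.2.2)
      (ENNReal.inv_ne_top.2 (hp.lintegral_rpow_ne_zero (by positivity))) hq' hp'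
      (hq1.trans hp1.symm) (by simp [hq1]) (by simp [hq1]) hnorm).mono fun x hx => ?_
    exact ENNReal.coe_injective hx
  · rw [compositeScore_congr_ae hqp.symm]
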